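/- Let l ∈ [0,1]ⁿ with d₁(l, V_odd) = 1, where V_odd is the set of odd vertices of the unit n-cube. Then any closed spherical polygon in S³ with edge lengths π·l₁, …, π·l_n has all its vertices on a single great circle, and any two such polygons differ by an isometry of S³. -/

import Mathlib

/-! Pick an odd vertex `v` of the cube with `‖l - v‖₁ = 1`. Negating every vertex of the polygon
that is preceded by an odd number of edges `i` with `v i = 1` turns the edge lengths `π lᵢ` into
`π |lᵢ - vᵢ|`, and since `v` is odd the last vertex of this unfolded chain is antipodal to the
first. A chain of total length `π` between antipodal points realises equality in the iterated
triangle inequality for angles, so it runs along one half great circle, with its vertices at arc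
lengths `π ∑_{i<k} |lᵢ - vᵢ|` that depend only on `l` and `v`. Hence every such polygon is one
model polygon written in some orthonormal frame, and any two frames differ by an isometry. -/

open Finset

/-- Geodesic distance on the unit sphere of `ℝ⁴`. -/
noncomputable def sphereDist4 (x y : EuclideanSpace ℝ (Fin 4)) : ℝ :=
  Real.arccos (inner ℝ x y)

open Real InnerProductGeometry Module Submodule
open scoped RealInnerProductSpace

theorem Real.prod_cos_eq_cos_sum {ι : Type*} (s : Finset ι) {x : ι → ℝ}
    (hx : ∀ i ∈ s, sin (x i) = 0) : ∏ i ∈ s, cos (x i) = cos (∑ i ∈ s, x i) := by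
  classical
  induction s using Finset.induction_on with
  | empty => simp
  | insert a s ha ih =>
    rw [prod_insert ha, sum_insert ha, cos_add, hx a (mem_insert_self a s), zero_mul, sub_zero,
      ih fun i hi => hx i (mem_insert_of_mem hi)]

section

variable {V : Type*} [NormedAddCommGroup V] [InnerProductSpace ℝ V]

theorem exists_norm_eq_one_inner_eq_zero [FiniteDimensional ℝ V] (hV : 2 ≤ finrank ℝ V) (x : V) :
    ∃ u : V, ‖u‖ = 1 ∧ ⟪x, u⟫ = 0 := by
  have hK : (ℝ ∙ x)ᗮ ≠ ⊥ := by
    intro h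
    have hsum := (ℝ ∙ x).finrank_add_finrank_orthogonal
    have hle : finrank ℝ (ℝ ∙ x) ≤ 1 := by simpa using finrank_span_le_card ({x} : Set V)
    rw [h, finrank_bot, add_zero] at hsum
    omega
  obtain ⟨w, hw, hw0⟩ := exists_mem_ne_zero_of_ne_bot hK
  refine ⟨‖w‖⁻¹ • w, norm_smul_inv_norm hw0, ?_⟩
  rw [real_inner_smul_right, mem_orthogonal_singleton_iff_inner_right.mp hw, mul_zero]

theorem exists_eq_cos_smul_add_sin_smul [FiniteDimensional ℝ V] (hV : 2 ≤ finrank ℝ V)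
    {ι : Type*} {x : V} (hx : ‖x‖ = 1) (Q : ι → V) (θ : ι → ℝ) (hθ : ∀ i, θ i ∈ Set.Icc 0 π)
    (hxQ : ∀ i, ⟪x, Q i⟫ = cos (θ i)) (hQQ : ∀ i j, ⟪Q i, Q j⟫ = cos (θ i - θ j)) :
    ∃ u : V, ‖u‖ = 1 ∧ ⟪x, u⟫ = 0 ∧ ∀ i, Q i = cos (θ i) • x + sin (θ i) • u := by
  set r : ι → V := fun i => Q i - cos (θ i) • x
  have hQ : ∀ i, Q i = cos (θ i) • x + r i := fun i => by simp [r]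
  have hxr : ∀ i, ⟪x, r i⟫ = 0 := fun i => by
    simp [r, inner_sub_right, real_inner_smul_right, hx, hxQ]
  have hrr : ∀ i j, ⟪r i, r j⟫ = sin (θ i) * sin (θ j) := fun i j => by
    simp only [r, inner_sub_left, inner_sub_right, real_inner_smul_left, real_inner_smul_right,
      real_inner_self_eq_norm_sq, hx, hQQ, hxQ, real_inner_comm x, cos_sub]
    ring
  have hnorm : ∀ i, ‖r i‖ = sin (θ i) := fun i => by
    rw [norm_eq_sqrt_real_inner, hrr, Real.sqrt_mul_self
      (sin_nonneg_of_nonneg_of_le_pi (hθ i).1 (hθ i).2)]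
  by_cases h0 : ∀ i, r i = 0
  · obtain ⟨u, hu, hxu⟩ := exists_norm_eq_one_inner_eq_zero hV x
    refine ⟨u, hu, hxu, fun i => ?_⟩
    rw [hQ i, ← hnorm i, h0 i, norm_zero, zero_smul]
  obtain ⟨i₀, hi₀⟩ := not_forall.mp h0
  refine ⟨‖r i₀‖⁻¹ • r i₀, norm_smul_inv_norm hi₀, by rw [real_inner_smul_right, hxr, mul_zero],
    fun i => ?_⟩
  -- equality in Cauchy–Schwarz makes every `r i` a nonnegative multiple of `r i₀`
  have hpar : ‖r i₀‖ • r i = ‖r i‖ • r i₀ :=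
    inner_eq_norm_mul_iff_real.mp (by rw [hrr, hnorm, hnorm])
  rw [hQ i, ← hnorm i, smul_smul, mul_comm, ← smul_smul, ← hpar, smul_smul,
    inv_mul_cancel₀ (norm_ne_zero_iff.mpr hi₀), one_smul]

theorem angle_le_sum_Ico_angle {Q : ℕ → V} (hQ : ∀ k, Q k ≠ 0) {i j : ℕ} (hij : i ≤ j) :
    angle (Q i) (Q j) ≤ ∑ k ∈ Ico i j, angle (Q k) (Q (k + 1)) := by
  induction j, hij using Nat.le_induction with
  | base => simp [angle_self (hQ i)]
  | succ j hij ih =>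
    rw [sum_Ico_succ_top hij]
    exact (angle_le_angle_add_angle _ (Q j) _).trans (by linarith)

theorem angle_eq_sum_Ico_angle {Q : ℕ → V} (hQ : ∀ k, Q k ≠ 0) {N : ℕ}
    (hN : angle (Q 0) (Q N) = ∑ k ∈ range N, angle (Q k) (Q (k + 1)))
    {i j : ℕ} (hij : i ≤ j) (hjN : j ≤ N) :
    angle (Q i) (Q j) = ∑ k ∈ Ico i j, angle (Q k) (Q (k + 1)) := by
  have hsplit := sum_Ico_consecutive (fun k => angle (Q k) (Q (k + 1))) (Nat.zero_le i) hij
  rw [range_eq_Ico, ← sum_Ico_consecutive _ (Nat.zero_le j) hjN, ← hsplit] at hN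
  have h1 := angle_le_sum_Ico_angle hQ (Nat.zero_le i)
  have h2 := angle_le_sum_Ico_angle hQ hij
  have h3 := angle_le_sum_Ico_angle hQ hjN
  have h4 := angle_le_angle_add_angle (Q 0) (Q i) (Q N)
  have h5 := angle_le_angle_add_angle (Q i) (Q j) (Q N)
  linarith

theorem exists_eq_cos_smul_add_sin_smul_of_angle_eq_sum [FiniteDimensional ℝ V]
    (hV : 2 ≤ finrank ℝ V) {Q : ℕ → V} (hQ : ∀ k, ‖Q k‖ = 1) {N : ℕ}
    (hN : angle (Q 0) (Q N) = ∑ k ∈ range N, angle (Q k) (Q (k + 1))) :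
    ∃ u : V, ‖u‖ = 1 ∧ ⟪Q 0, u⟫ = 0 ∧ ∀ j ≤ N,
      Q j = cos (∑ k ∈ range j, angle (Q k) (Q (k + 1))) • Q 0 +
        sin (∑ k ∈ range j, angle (Q k) (Q (k + 1))) • u := by
  set D : ℕ → ℝ := fun j => ∑ k ∈ range j, angle (Q k) (Q (k + 1))
  have hQ0 : ∀ k, Q k ≠ 0 := fun k => norm_ne_zero_iff.mp (by simp [hQ k])
  have hangle : ∀ i j, i ≤ j → j ≤ N → angle (Q i) (Q j) = D j - D i := fun i j hij hjN => by
    rw [angle_eq_sum_Ico_angle hQ0 hN hij hjN, sum_Ico_eq_sub _ hij]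
  have hinner : ∀ i j, i ≤ N → j ≤ N → ⟪Q i, Q j⟫ = cos (D i - D j) := by
    intro i j hi hj
    rcases le_total i j with hij | hji
    · rw [inner_eq_cos_angle_of_norm_eq_one (hQ i) (hQ j), hangle i j hij hj, ← cos_neg, neg_sub]
    · rw [real_inner_comm, inner_eq_cos_angle_of_norm_eq_one (hQ j) (hQ i), hangle j i hji hi]
  have hD0 : D 0 = 0 := sum_range_zero _
  have hD : ∀ j ≤ N, D j = angle (Q 0) (Q j) := fun j hj => by
    rw [hangle 0 j (Nat.zero_le _) hj, hD0, sub_zero]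
  obtain ⟨u, hu, h0u, hu'⟩ := exists_eq_cos_smul_add_sin_smul hV (hQ 0)
    (fun j : {j // j ≤ N} => Q j) (fun j => D j)
    (fun j => hD j j.2 ▸ ⟨angle_nonneg _ _, angle_le_pi _ _⟩)
    (fun j => by rw [hinner 0 j (Nat.zero_le _) j.2, hD0, zero_sub, cos_neg])
    (fun i j => hinner i j i.2 j.2)
  exact ⟨u, hu, h0u, fun j hj => hu' ⟨j, hj⟩⟩

theorem InnerProductGeometry.angle_smul_one_sub_two_mul {v : ℝ} (hv : v = 0 ∨ v = 1) (x y : V) :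
    angle x ((1 - 2 * v) • y) = |angle x y - π * v| := by
  rcases hv with rfl | rfl
  · simp [abs_of_nonneg (angle_nonneg x y)]
  · norm_num [angle_neg_right, abs_of_nonpos (sub_nonpos.mpr (angle_le_pi x y))]

theorem Orthonormal.exists_linearIsometryEquiv_comp_eq [FiniteDimensional ℝ V] {ι : Type*}
    [Fintype ι] {v w : ι → V} (hv : Orthonormal ℝ v) (hw : Orthonormal ℝ w) :
    ∃ f : V ≃ₗᵢ[ℝ] V, f ∘ v = w := by
  classical
  let bv := OrthonormalBasis.span hv univ
  let bw := OrthonormalBasis.span hw univ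
  let L := (span ℝ _).subtypeₗᵢ.comp (bv.equiv bw (Equiv.refl _)).toLinearIsometry
  refine ⟨L.extend.toLinearIsometryEquiv rfl, funext fun i => ?_⟩
  simpa [L, bv, bw] using L.extend_apply (bv ⟨i, mem_univ i⟩)

open Fin.NatCast

variable {n : ℕ} [NeZero n] {v : Fin n → ℝ}

def foldSign (v : Fin n → ℝ) (j : ℕ) : ℝ := ∏ i ∈ range j, (1 - 2 * v i)

@[simp]
theorem foldSign_zero (v : Fin n → ℝ) : foldSign v 0 = 1 := prod_range_zero _

theorem foldSign_succ (v : Fin n → ℝ) (j : ℕ) :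
    foldSign v (j + 1) = foldSign v j * (1 - 2 * v j) :=
  prod_range_succ _ _

theorem abs_foldSign (hv : ∀ i, v i = 0 ∨ v i = 1) (j : ℕ) : |foldSign v j| = 1 := by
  rw [foldSign, abs_prod]
  exact prod_eq_one fun i _ => by rcases hv i with h | h <;> norm_num [h]

theorem foldSign_self (hv : ∀ i, v i = 0 ∨ v i = 1) (hodd : ∃ m : ℤ, ∑ i, v i = 2 * m + 1) :
    foldSign v n = -1 := by
  obtain ⟨m, hm⟩ := hodd
  have hcos : ∀ i, 1 - 2 * v i = cos (π * v i) := fun i => by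
    rcases hv i with h | h <;> norm_num [h]
  calc foldSign v n = ∏ i : Fin n, cos (π * v i) := by
        simp only [foldSign, hcos, ← Fin.prod_univ_eq_prod_range, Fin.cast_val_eq_self]
    _ = cos (π * ∑ i, v i) := by
        rw [Real.prod_cos_eq_cos_sum, mul_sum]
        intro i _
        rcases hv i with h | h <;> simp [h]
    _ = -1 := by rw [hm, ← cos_int_mul_two_pi_add_pi m]; ring_nf

-- `p j` reads the index `j : ℕ` modulo `n`
def unfoldPolygon (v : Fin n → ℝ) (p : Fin n → V) (j : ℕ) : V := foldSign v j • p j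

theorem norm_unfoldPolygon (hv : ∀ i, v i = 0 ∨ v i = 1) {p : Fin n → V} (hp : ∀ k, ‖p k‖ = 1)
    (j : ℕ) : ‖unfoldPolygon v p j‖ = 1 := by
  rw [unfoldPolygon, norm_smul, Real.norm_eq_abs, abs_foldSign hv, hp, one_mul]

theorem angle_unfoldPolygon_succ (hv : ∀ i, v i = 0 ∨ v i = 1) {l : Fin n → ℝ} {p : Fin n → V}
    (he : ∀ k, angle (p k) (p (k + 1)) = π * l k) (j : ℕ) :
    angle (unfoldPolygon v p j) (unfoldPolygon v p (j + 1)) = π * |l j - v j| := by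
  have hσ : foldSign v j ≠ 0 := fun h => by simpa [h] using abs_foldSign hv j
  rw [unfoldPolygon, unfoldPolygon, foldSign_succ, mul_smul, Nat.cast_succ,
    angle_smul_smul hσ, angle_smul_one_sub_two_mul (hv j), he, ← mul_sub, abs_mul,
    abs_of_pos pi_pos]

theorem unfoldPolygon_self (hv : ∀ i, v i = 0 ∨ v i = 1) (hodd : ∃ m : ℤ, ∑ i, v i = 2 * m + 1)
    (p : Fin n → V) : unfoldPolygon v p n = -unfoldPolygon v p 0 := by
  simp [unfoldPolygon, foldSign_self hv hodd]

noncomputable def modelPolygon (l v : Fin n → ℝ) (e : Fin 2 → V) (k : Fin n) : V :=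
  foldSign v k • (cos (π * ∑ i ∈ range k, |l i - v i|) • e 0 +
    sin (π * ∑ i ∈ range k, |l i - v i|) • e 1)

theorem modelPolygon_mem_span (l v : Fin n → ℝ) (e : Fin 2 → V) (k : Fin n) :
    modelPolygon l v e k ∈ span ℝ (Set.range e) :=
  smul_mem _ _ <| add_mem (smul_mem _ _ (subset_span ⟨0, rfl⟩))
    (smul_mem _ _ (subset_span ⟨1, rfl⟩))

theorem map_modelPolygon {W F : Type*} [NormedAddCommGroup W] [InnerProductSpace ℝ W]
    [FunLike F V W] [LinearMapClass F ℝ V W] (f : F) (l v : Fin n → ℝ) (e : Fin 2 → V)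
    (k : Fin n) : f (modelPolygon l v e k) = modelPolygon l v (f ∘ e) k := by
  simp [modelPolygon]

theorem eq_modelPolygon [FiniteDimensional ℝ V] (hV : 2 ≤ finrank ℝ V) {l : Fin n → ℝ}
    (hv : ∀ i, v i = 0 ∨ v i = 1) (hodd : ∃ m : ℤ, ∑ i, v i = 2 * m + 1)
    (hlv : ∑ i, |l i - v i| = 1) {p : Fin n → V} (hp : ∀ k, ‖p k‖ = 1)
    (he : ∀ k, angle (p k) (p (k + 1)) = π * l k) :
    ∃ e : Fin 2 → V, Orthonormal ℝ e ∧ p = modelPolygon l v e := by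
  have hD : ∀ j, ∑ k ∈ range j, angle (unfoldPolygon v p k) (unfoldPolygon v p (k + 1)) =
      π * ∑ k ∈ range j, |l k - v k| :=
    fun j => by simp only [angle_unfoldPolygon_succ hv he, mul_sum]
  have hnorm := norm_unfoldPolygon hv hp
  have hp0 : unfoldPolygon v p 0 = p 0 := by simp [unfoldPolygon]
  have hN : angle (unfoldPolygon v p 0) (unfoldPolygon v p n) =
      ∑ k ∈ range n, angle (unfoldPolygon v p k) (unfoldPolygon v p (k + 1)) := by
    have h0 : unfoldPolygon v p 0 ≠ 0 := norm_ne_zero_iff.mp (by simp [hnorm])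
    rw [hD, unfoldPolygon_self hv hodd, angle_self_neg_of_nonzero h0,
      ← Fin.sum_univ_eq_sum_range (fun k => |l k - v k|)]
    simp [hlv]
  obtain ⟨u, hu, h0u, hQ⟩ := exists_eq_cos_smul_add_sin_smul_of_angle_eq_sum hV hnorm hN
  refine ⟨![p 0, u], ?_, funext fun k => ?_⟩
  · simp [← hp0, hnorm, hu, h0u]
  have hσ : foldSign v k * foldSign v k = 1 := by
    rw [← abs_mul_abs_self, abs_foldSign hv, one_mul]
  calc p k = foldSign v k • unfoldPolygon v p k := by simp [unfoldPolygon, smul_smul, hσ]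
    _ = modelPolygon l v ![p 0, u] k := by
      rw [hQ k k.is_lt.le, hD, hp0]; rfl

end

theorem sphereDist4_eq_angle {x y : EuclideanSpace ℝ (Fin 4)} (hx : ‖x‖ = 1) (hy : ‖y‖ = 1) :
    sphereDist4 x y = angle x y := by
  simp [sphereDist4, angle, hx, hy]

theorem spherical_polygon_coaxial_unique_general (n : ℕ) [NeZero n] (l : Fin n → ℝ)
    (hach : ∃ v : Fin n → ℝ,
      ((∀ i, v i = 0 ∨ v i = 1) ∧ ∃ m : ℤ, ∑ i, v i = 2 * (m : ℝ) + 1) ∧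
      ∑ i, |l i - v i| = 1) :
    (∀ p : Fin n → EuclideanSpace ℝ (Fin 4),
      (∀ k, ‖p k‖ = 1) →
      (∀ k : Fin n, sphereDist4 (p k) (p (k + 1)) = Real.pi * l k) →
      ∃ W : Submodule ℝ (EuclideanSpace ℝ (Fin 4)),
        Module.finrank ℝ W = 2 ∧ ∀ k, p k ∈ W) ∧
    (∀ p q : Fin n → EuclideanSpace ℝ (Fin 4),
      (∀ k, ‖p k‖ = 1) →
      (∀ k : Fin n, sphereDist4 (p k) (p (k + 1)) = Real.pi * l k) →
      (∀ k, ‖q k‖ = 1) →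
      (∀ k : Fin n, sphereDist4 (q k) (q (k + 1)) = Real.pi * l k) →
      ∃ f : EuclideanSpace ℝ (Fin 4) ≃ₗᵢ[ℝ] EuclideanSpace ℝ (Fin 4),
        ∀ k, f (p k) = q k) := by
  obtain ⟨v, ⟨hv, hodd⟩, hlv⟩ := hach
  have hmodel : ∀ p : Fin n → EuclideanSpace ℝ (Fin 4), (∀ k, ‖p k‖ = 1) →
      (∀ k : Fin n, sphereDist4 (p k) (p (k + 1)) = π * l k) →
      ∃ e : Fin 2 → EuclideanSpace ℝ (Fin 4), Orthonormal ℝ e ∧ p = modelPolygon l v e :=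
    fun p hp hd => eq_modelPolygon (by simp) hv hodd hlv hp
      fun k => by rw [← sphereDist4_eq_angle (hp k) (hp _), hd]
  refine ⟨fun p hp hd => ?_, fun p q hp hdp hq hdq => ?_⟩
  · obtain ⟨e, he, rfl⟩ := hmodel p hp hd
    exact ⟨span ℝ (Set.range e), by rw [finrank_span_eq_card he.linearIndependent,
      Fintype.card_fin], modelPolygon_mem_span l v e⟩
  · obtain ⟨e, he, rfl⟩ := hmodel p hp hdp
    obtain ⟨e', he', rfl⟩ := hmodel q hq hdq
    obtain ⟨f, hf⟩ := he.exists_linearIsometryEquiv_comp_eq he'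
    exact ⟨f, fun k => by rw [map_modelPolygon, hf]⟩

/-- If `l ∈ [0,1]ⁿ` is at `ℓ¹`-distance exactly `1` from the set of odd vertices of the unit
cube, then every closed spherical polygon in `S³` with edge lengths `π·lᵢ` is coaxial (its
vertices lie in a 2-dimensional linear subspace, i.e. on a great circle), and any two such
polygons differ by an isometry of `S³`. -/
theorem spherical_polygon_coaxial_unique (n : ℕ) [NeZero n] (l : Fin n → ℝ)
    (hl : ∀ i, l i ∈ Set.Icc (0 : ℝ) 1)
    (hge : ∀ v : Fin n → ℝ,
      ((∀ i, v i = 0 ∨ v i = 1) ∧ ∃ m : ℤ, ∑ i, v i = 2 * (m : ℝ) + 1) →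
      1 ≤ ∑ i, |l i - v i|)
    (hach : ∃ v : Fin n → ℝ,
      ((∀ i, v i = 0 ∨ v i = 1) ∧ ∃ m : ℤ, ∑ i, v i = 2 * (m : ℝ) + 1) ∧
      ∑ i, |l i - v i| = 1) :
    (∀ p : Fin n → EuclideanSpace ℝ (Fin 4),
      (∀ k, ‖p k‖ = 1) →
      (∀ k : Fin n, sphereDist4 (p k) (p (k + 1)) = Real.pi * l k) →
      ∃ W : Submodule ℝ (EuclideanSpace ℝ (Fin 4)),
        Module.finrank ℝ W = 2 ∧ ∀ k, p k ∈ W) ∧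
    (∀ p q : Fin n → EuclideanSpace ℝ (Fin 4),
      (∀ k, ‖p k‖ = 1) →
      (∀ k : Fin n, sphereDist4 (p k) (p (k + 1)) = Real.pi * l k) →
      (∀ k, ‖q k‖ = 1) →
      (∀ k : Fin n, sphereDist4 (q k) (q (k + 1)) = Real.pi * l k) →
      ∃ f : EuclideanSpace ℝ (Fin 4) ≃ₗᵢ[ℝ] EuclideanSpace ℝ (Fin 4),
        ∀ k, f (p k) = q k) :=
  spherical_polygon_coaxial_unique_general n l hach
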